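/- If discrete random variables f_i, f_j, Y satisfy I(f_i;Y) > I(f_j;Y), then I(f_j;Y|f_i) < I(f_i;Y|f_j). -/
import Mathlib


open Finset

noncomputable section

variable {Ω : Type*} [Fintype Ω]

/-- Probability of an event under a pmf `p` on a finite sample space. -/
def pr (p : Ω → ℝ) (E : Set Ω) : ℝ := ∑ ω, E.indicator p ω

/-- `p` is a probability mass function. -/
def IsProb (p : Ω → ℝ) : Prop := (∀ ω, 0 ≤ p ω) ∧ ∑ ω, p ω = 1

/-- `P(X = x)` -/
def pv {α : Type*} (p : Ω → ℝ) (X : Ω → α) (x : α) : ℝ := pr p {ω | X ω = x}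

/-- `P(X = x, Y = y)` -/
def pv2 {α β : Type*} (p : Ω → ℝ) (X : Ω → α) (Y : Ω → β) (x : α) (y : β) : ℝ :=
  pr p {ω | X ω = x ∧ Y ω = y}

/-- `P(X = x, Y = y, Z = z)` -/
def pv3 {α β γ : Type*} (p : Ω → ℝ) (X : Ω → α) (Y : Ω → β) (Z : Ω → γ)
    (x : α) (y : β) (z : γ) : ℝ :=
  pr p {ω | X ω = x ∧ Y ω = y ∧ Z ω = z}

/-- Shannon entropy `H(X)` (with the convention `0 log 0 = 0`). -/
def ent {α : Type*} [Fintype α] (p : Ω → ℝ) (X : Ω → α) : ℝ :=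
  ∑ x, Real.negMulLog (pv p X x)

/-- Conditional entropy `H(X | Y) = -∑ P(x,y) log P(x|y)`. -/
def condEnt {α β : Type*} [Fintype α] [Fintype β] (p : Ω → ℝ) (X : Ω → α) (Y : Ω → β) : ℝ :=
  -∑ x, ∑ y, pv2 p X Y x y * Real.log (pv2 p X Y x y / pv p Y y)

/-- Mutual information `I(X;Y) = ∑ P(x,y) log (P(x,y) / (P(x) P(y)))`. -/
def mi {α β : Type*} [Fintype α] [Fintype β] (p : Ω → ℝ) (X : Ω → α) (Y : Ω → β) : ℝ :=
  ∑ x, ∑ y, pv2 p X Y x y * Real.log (pv2 p X Y x y / (pv p X x * pv p Y y))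

/-- Conditional mutual information
`I(X;Y|Z) = ∑ P(x,y,z) log (P(z) P(x,y,z) / (P(x,z) P(y,z)))`. -/
def cmi {α β γ : Type*} [Fintype α] [Fintype β] [Fintype γ]
    (p : Ω → ℝ) (X : Ω → α) (Y : Ω → β) (Z : Ω → γ) : ℝ :=
  ∑ x, ∑ y, ∑ z, pv3 p X Y Z x y z *
    Real.log (pv p Z z * pv3 p X Y Z x y z / (pv2 p X Z x z * pv2 p Y Z y z))

/-- `X ⊥ Z | W`, in cross-multiplied form:
`P(X=x, Z=z, W=w) P(W=w) = P(X=x, W=w) P(Z=z, W=w)`, which is equivalent to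
`P(x | z, w) = P(x | w)` whenever the conditioning events have positive probability. -/
def CondIndepC {α β γ : Type*} (p : Ω → ℝ) (X : Ω → α) (Z : Ω → β) (W : Ω → γ) : Prop :=
  ∀ x z w, pv3 p X Z W x z w * pv p W w = pv2 p X W x w * pv2 p Z W z w

/-- The joint random variable collecting the features indexed by a finite set `S`. -/
def restrict {ι α : Type*} (f : ι → Ω → α) (S : Finset ι) : Ω → (S → α) :=
  fun ω j => f j.1 ω


section Aux
variable {α β γ : Type*} [Fintype α] [Fintype β] [Fintype γ]

lemma pr_nonneg {p : Ω → ℝ} (hp : ∀ ω, 0 ≤ p ω) (E : Set Ω) : 0 ≤ pr p E :=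
  Finset.sum_nonneg fun ω _ => Set.indicator_nonneg (fun a _ => hp a) ω

lemma pr_mono {p : Ω → ℝ} (hp : ∀ ω, 0 ≤ p ω) {E F : Set Ω} (h : E ⊆ F) :
    pr p E ≤ pr p F :=
  Finset.sum_le_sum fun ω _ => Set.indicator_le_indicator_of_subset h hp ω

lemma pr_congr {p : Ω → ℝ} {E F : Set Ω} (h : ∀ ω, ω ∈ E ↔ ω ∈ F) : pr p E = pr p F := by
  rw [Set.ext h]

lemma pr_partition {p : Ω → ℝ} (E : Set Ω) (Z : Ω → γ) :
    pr p E = ∑ z, pr p (E ∩ {ω | Z ω = z}) := by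
  classical
  unfold pr
  rw [Finset.sum_comm]
  refine Finset.sum_congr rfl fun ω _ => ?_
  by_cases h : ω ∈ E
  · simp [Set.indicator_apply, Set.mem_inter_iff, h, Set.mem_setOf_eq]
  · simp [Set.indicator_apply, Set.mem_inter_iff, h]

lemma logterm (a pX pY pXY pXZ : ℝ) (ha : 0 ≤ a)
    (h1 : a ≤ pX) (h2 : a ≤ pY) (h3 : a ≤ pXY) (h4 : a ≤ pXZ) :
    a * Real.log (pXY / (pX * pY)) + a * Real.log (pX * a / (pXZ * pXY)) =
      a * Real.log (a / (pXZ * pY)) := by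
  rcases eq_or_lt_of_le ha with h0 | h0
  · simp [← h0]
  · have hX : 0 < pX := lt_of_lt_of_le h0 h1
    have hY : 0 < pY := lt_of_lt_of_le h0 h2
    have hXY : 0 < pXY := lt_of_lt_of_le h0 h3
    have hXZ : 0 < pXZ := lt_of_lt_of_le h0 h4
    rw [← mul_add, ← Real.log_mul (by positivity) (by positivity)]
    congr 2
    field_simp

lemma chain {p : Ω → ℝ} (hp : IsProb p) (X : Ω → α) (Z : Ω → β) (Y : Ω → γ) :
    mi p X Y + cmi p Z Y X =
      ∑ x, ∑ z, ∑ y, pr p {ω | X ω = x ∧ Z ω = z ∧ Y ω = y} *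
        Real.log (pr p {ω | X ω = x ∧ Z ω = z ∧ Y ω = y} /
          (pv2 p X Z x z * pv p Y y)) := by
  set q : α → β → γ → ℝ := fun x z y => pr p {ω | X ω = x ∧ Z ω = z ∧ Y ω = y} with hqdef
  have hpv2 : ∀ x y, pv2 p X Y x y = ∑ z, q x z y := by
    intro x y
    rw [pv2, pr_partition ({ω | X ω = x ∧ Y ω = y}) Z]
    refine Finset.sum_congr rfl fun z _ => pr_congr fun ω => ?_
    simp only [Set.mem_inter_iff, Set.mem_setOf_eq]
    tauto
  have hq3 : ∀ x z y, pv3 p Z Y X z y x = q x z y := by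
    intro x z y
    refine pr_congr fun ω => ?_
    simp only [Set.mem_setOf_eq]
    tauto
  have hXZe : ∀ x z, pv2 p Z X z x = pv2 p X Z x z := by
    intro x z
    refine pr_congr fun ω => ?_
    simp only [Set.mem_setOf_eq]
    tauto
  have hYXe : ∀ x y, pv2 p Y X y x = pv2 p X Y x y := by
    intro x y
    refine pr_congr fun ω => ?_
    simp only [Set.mem_setOf_eq]
    tauto
  have hm : mi p X Y = ∑ x, ∑ z, ∑ y,
      q x z y * Real.log (pv2 p X Y x y / (pv p X x * pv p Y y)) := by
    unfold mi
    refine Finset.sum_congr rfl fun x _ => ?_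
    rw [Finset.sum_comm]
    refine Finset.sum_congr rfl fun y _ => ?_
    rw [hpv2 x y, Finset.sum_mul]
  have hc : cmi p Z Y X = ∑ x, ∑ z, ∑ y,
      q x z y * Real.log (pv p X x * q x z y / (pv2 p X Z x z * pv2 p X Y x y)) := by
    have swap3 : ∀ (F : α → β → γ → ℝ),
        (∑ z, ∑ y, ∑ x, F x z y) = ∑ x, ∑ z, ∑ y, F x z y := by
      intro F
      calc (∑ z, ∑ y, ∑ x, F x z y) = ∑ z, ∑ x, ∑ y, F x z y :=
            Finset.sum_congr rfl fun z _ => Finset.sum_comm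
        _ = ∑ x, ∑ z, ∑ y, F x z y := Finset.sum_comm
    unfold cmi
    simp only [hq3, hXZe, hYXe]
    exact swap3 fun x z y =>
      q x z y * Real.log (pv p X x * q x z y / (pv2 p X Z x z * pv2 p X Y x y))
  rw [hm, hc, ← Finset.sum_add_distrib]
  refine Finset.sum_congr rfl fun x _ => ?_
  rw [← Finset.sum_add_distrib]
  refine Finset.sum_congr rfl fun z _ => ?_
  rw [← Finset.sum_add_distrib]
  refine Finset.sum_congr rfl fun y _ => ?_
  refine logterm _ _ _ _ _ (pr_nonneg hp.1 _) ?_ ?_ ?_ ?_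
  · exact pr_mono hp.1 fun ω h => h.1
  · exact pr_mono hp.1 fun ω h => h.2.2
  · exact pr_mono hp.1 fun ω h => ⟨h.1, h.2.2⟩
  · exact pr_mono hp.1 fun ω h => ⟨h.1, h.2.1⟩

lemma S_symm (p : Ω → ℝ) (X : Ω → α) (Z : Ω → β) (Y : Ω → γ) :
    (∑ x, ∑ z, ∑ y, pr p {ω | X ω = x ∧ Z ω = z ∧ Y ω = y} *
        Real.log (pr p {ω | X ω = x ∧ Z ω = z ∧ Y ω = y} /
          (pv2 p X Z x z * pv p Y y))) =
    ∑ z, ∑ x, ∑ y, pr p {ω | Z ω = z ∧ X ω = x ∧ Y ω = y} *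
        Real.log (pr p {ω | Z ω = z ∧ X ω = x ∧ Y ω = y} /
          (pv2 p Z X z x * pv p Y y)) := by
  rw [Finset.sum_comm]
  refine Finset.sum_congr rfl fun z _ => Finset.sum_congr rfl fun x _ =>
    Finset.sum_congr rfl fun y _ => ?_
  have h1 : pr p {ω | X ω = x ∧ Z ω = z ∧ Y ω = y} =
      pr p {ω | Z ω = z ∧ X ω = x ∧ Y ω = y} := by
    refine pr_congr fun ω => ?_
    simp only [Set.mem_setOf_eq]
    tauto
  have h2 : pv2 p X Z x z = pv2 p Z X z x := by
    refine pr_congr fun ω => ?_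
    simp only [Set.mem_setOf_eq]
    tauto
  rw [h1, h2]

end Aux

/-- if `I(f_i;Y) > I(f_j;Y)` then `I(f_j;Y|f_i) < I(f_i;Y|f_j)`. -/
theorem swap_cmi_lt {α β γ : Type*} [Fintype α] [Fintype β] [Fintype γ]
    (p : Ω → ℝ) (hp : IsProb p) (fi : Ω → α) (fj : Ω → β) (Y : Ω → γ)
    (h : mi p fi Y > mi p fj Y) :
    cmi p fj Y fi < cmi p fi Y fj := by
  have e1 := chain hp fi fj Y
  have e2 := chain hp fj fi Y
  have es := S_symm p fi fj Y
  linarith
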